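/- The category of pre-nets has all small colimits; in particular, it has all finite colimits (including an initial object, binary coproducts, and coequalizers). -/

import Mathlib

open CategoryTheory CategoryTheory.Limits

/-- A pre-net: a type of places, a type of transitions, and source/target
functions assigning to each transition a list of places (an element of the
free monoid on places). -/
structure PreNet : Type 1 where
  S : Type
  T : Type
  src : T → List S
  tgt : T → List S

/-- A morphism of pre-nets: a pair of functions on places and transitions
commuting with the source and target maps. -/
@[ext]
structure PreNet.Hom (N M : PreNet) where
  f : N.S → M.S
  g : N.T → M.T
  src_comm : M.src ∘ g = List.map f ∘ N.src
  tgt_comm : M.tgt ∘ g = List.map f ∘ N.tgt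

instance : Category PreNet where
  Hom := PreNet.Hom
  id N := ⟨id, id, by funext t; simp, by funext t; simp⟩
  comp φ ψ :=
    ⟨ψ.f ∘ φ.f, ψ.g ∘ φ.g,
      by funext t
         have h1 := congrFun ψ.src_comm (φ.g t)
         have h2 := congrFun φ.src_comm t
         simp only [Function.comp] at *
         rw [h1, h2, List.map_map],
      by funext t
         have h1 := congrFun ψ.tgt_comm (φ.g t)
         have h2 := congrFun φ.tgt_comm t
         simp only [Function.comp] at *
         rw [h1, h2, List.map_map]⟩
  id_comp φ := PreNet.Hom.ext rfl rfl
  comp_id φ := PreNet.Hom.ext rfl rfl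
  assoc φ ψ χ := PreNet.Hom.ext rfl rfl

/-! A pre-net is exactly an object of the comma category `𝟭 Type ↓ listPair`, where
`listPair X = List X × List X`: a map `T → List S × List S` packages `src` and `tgt`.
Colimits in such a comma category are computed componentwise, because the left functor `𝟭 Type`
preserves them and `Type` is cocomplete; transporting along the equivalence gives all colimits. -/

def listPair : Type ⥤ Type where
  obj X := List X × List X
  map f := TypeCat.ofHom (Prod.map (List.map f) (List.map f))

namespace PreNet

def toComma : PreNet ⥤ Comma (𝟭 Type) listPair where
  obj N := { left := N.T, right := N.S, hom := TypeCat.ofHom fun t => (N.src t, N.tgt t) }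
  map φ :=
    { left := TypeCat.ofHom φ.g
      right := TypeCat.ofHom φ.f
      w := by
        ext t
        exact Prod.ext (congrFun φ.src_comm t) (congrFun φ.tgt_comm t) }

def ofComma : Comma (𝟭 Type) listPair ⥤ PreNet where
  obj C := ⟨C.right, C.left, fun t => (C.hom t).1, fun t => (C.hom t).2⟩
  map ψ :=
    ⟨ψ.right, ψ.left,
      funext fun t => by exact congrArg Prod.fst (ConcreteCategory.congr_hom ψ.w t),
      funext fun t => by exact congrArg Prod.snd (ConcreteCategory.congr_hom ψ.w t)⟩

def equivComma : PreNet ≌ Comma (𝟭 Type) listPair where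
  functor := toComma
  inverse := ofComma
  unitIso := NatIso.ofComponents (fun _ => Iso.refl _)
  counitIso := NatIso.ofComponents (fun _ => Iso.refl _)

instance : HasColimits PreNet :=
  Adjunction.has_colimits_of_equivalence equivComma.functor

end PreNet

/-- The category of pre-nets has all small colimits; in particular it has all
finite colimits, including an initial object, binary coproducts, and
coequalizers. -/
theorem preNet_hasColimits :
    HasColimits PreNet ∧ HasFiniteColimits PreNet ∧ HasInitial PreNet ∧
      HasBinaryCoproducts PreNet ∧ HasCoequalizers PreNet :=
  ⟨inferInstance, hasFiniteColimits_of_hasColimits PreNet, inferInstance, inferInstance,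
    inferInstance⟩
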